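/- Let α be an irrational number not equivalent to (1+√5)/2 and not equivalent bis (1+√17)/2, whose continued fraction expansion has aₙ ∈ {1, 3} for infinitely many n. If for infinitely many n one has a_{n−1} = aₙ = 3, then 𝔨(α) ≤ 39/43. -/

import Mathlib

open Filter

/-- The tails `αₙ = [aₙ; aₙ₊₁, …]` of the continued fraction of `α`. -/
noncomputable def cfTail (α : ℝ) : ℕ → ℝ
  | 0 => α
  | n + 1 => (Int.fract (cfTail α n))⁻¹

/-- The partial quotients `aₙ` of the continued fraction of `α`. -/
noncomputable def cfDigit (α : ℝ) (n : ℕ) : ℤ := ⌊cfTail α n⌋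

/-- Value `[a; b, c, …]` of a finite continued fraction given by a list. -/
noncomputable def finCF : List ℤ → ℝ
  | [] => 0
  | a :: l => (a : ℝ) + (finCF l)⁻¹

/-- `α*ₙ = [0; aₙ, aₙ₋₁, …, a₁]`. -/
noncomputable def cfStar (α : ℝ) (n : ℕ) : ℝ :=
  (finCF (((List.range' 1 n).reverse).map (cfDigit α)))⁻¹

/-- Numerators `pₙ` of the convergents of `α`. -/
noncomputable def cfNum (α : ℝ) : ℕ → ℤ
  | 0 => cfDigit α 0
  | 1 => cfDigit α 1 * cfDigit α 0 + 1
  | n + 2 => cfDigit α (n + 2) * cfNum α (n + 1) + cfNum α n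

/-- Denominators `qₙ` of the convergents of `α`. -/
noncomputable def cfDen (α : ℝ) : ℕ → ℤ
  | 0 => 1
  | 1 => cfDigit α 1
  | n + 2 => cfDigit α (n + 2) * cfDen α (n + 1) + cfDen α n

/-- The irrationality measure function `ψ_α^[2]` for "second best" approximations. -/
noncomputable def psi2 (α : ℝ) (t : ℝ) : ℝ :=
  sInf { x : ℝ | ∃ p q : ℤ, 1 ≤ q ∧ (q : ℝ) ≤ t ∧
    (∀ n : ℕ, (p, q) ≠ (cfNum α n, cfDen α n)) ∧ x = |(q : ℝ) * α - (p : ℝ)| }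

/-- The Diophantine constant `𝔨(α) = liminf_{t → ∞} t · ψ_α^[2](t)`. -/
noncomputable def kConst (α : ℝ) : ℝ := liminf (fun t : ℝ => t * psi2 α t) atTop

/-- Two numbers are equivalent if the tails of their continued fraction expansions
coincide: `a_{n+k} = b_{m+k}` for all `k ≥ 1`, for some positive integers `m`, `n`. -/
def CFEquiv (α β : ℝ) : Prop :=
  ∃ n m : ℕ, 0 < n ∧ 0 < m ∧ ∀ k : ℕ, 0 < k → cfDigit α (n + k) = cfDigit β (m + k)

/-- The spectrum `𝕃₂` of values of `𝔨`. -/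
def L2 : Set ℝ := { l : ℝ | ∃ α : ℝ, Irrational α ∧ l = kConst α }

/-- `κ¹ₙ(α) = (1 + α*ₙ₋₁)(αₙ − 1)/(αₙ + α*ₙ₋₁)`. -/
noncomputable def kappa1 (α : ℝ) (n : ℕ) : ℝ :=
  (1 + cfStar α (n - 1)) * (cfTail α n - 1) / (cfTail α n + cfStar α (n - 1))

/-- `κ²ₙ(α) = (1 − α*ₙ)(αₙ₊₁ + 1)/(αₙ₊₁ + α*ₙ)`. -/
noncomputable def kappa2 (α : ℝ) (n : ℕ) : ℝ :=
  (1 - cfStar α n) * (cfTail α (n + 1) + 1) / (cfTail α (n + 1) + cfStar α n)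

/-- `κ⁴ₙ(α) = 4/(αₙ + α*ₙ₋₁)`. -/
noncomputable def kappa4 (α : ℝ) (n : ℕ) : ℝ :=
  4 / (cfTail α n + cfStar α (n - 1))

/-!
Write `p/q = pₙ/qₙ`, `p'/q' = pₙ₊₁/qₙ₊₁` and `x = αₙ₊₂`. From `α (q' x + q) = p' x + p` and
`p' q - p q' = ±1`, the intermediate fraction `(p' + k p)/(q' + k q)` satisfies
`|(q' + k q) α - (p' + k p)| = |k x - 1| / (q' x + q)`. If `2 ≤ aₙ₊₁ ≤ 3` and `aₙ₊₂ ≥ 2`, the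
fractions with `k = ±1` have denominators strictly between consecutive `qₘ`, so they are not
convergents, and `r = q/q'` lies in `[1/4, 1/2)`. Taking `k = 1` when `r x ≤ 1` and `k = -1`
otherwise gives `t ψ_α^[2](t) ≤ (1 - r²)/(1 + r²) ≤ 15/17 < 39/43` at `t = q' + k q`, and a
pair `aₙ₊₁ = aₙ₊₂ = 3` is such an index.
-/

theorem cfTail_irrational {α : ℝ} (hα : Irrational α) : ∀ n, Irrational (cfTail α n)
  | 0 => hα
  | n + 1 => ((cfTail_irrational hα n).sub_intCast _).inv

theorem one_lt_cfTail_succ {α : ℝ} (hα : Irrational α) (n : ℕ) : 1 < cfTail α (n + 1) :=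
  (one_lt_inv₀ (Int.fract_pos.2 ((cfTail_irrational hα n).ne_int _))).2 (Int.fract_lt_one _)

theorem cfTail_eq_cfDigit_add_inv (α : ℝ) (n : ℕ) :
    cfTail α n = cfDigit α n + (cfTail α (n + 1))⁻¹ := by
  rw [cfTail, inv_inv, cfDigit, Int.fract, add_sub_cancel]

theorem one_le_cfDigit_succ {α : ℝ} (hα : Irrational α) (n : ℕ) : 1 ≤ cfDigit α (n + 1) :=
  Int.le_floor.2 (by exact_mod_cast (one_lt_cfTail_succ hα n).le)

theorem cfDen_succ_succ (α : ℝ) (n : ℕ) :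
    cfDen α (n + 2) = cfDigit α (n + 2) * cfDen α (n + 1) + cfDen α n := rfl

theorem cfNum_succ_succ (α : ℝ) (n : ℕ) :
    cfNum α (n + 2) = cfDigit α (n + 2) * cfNum α (n + 1) + cfNum α n := rfl

theorem one_le_cfDen {α : ℝ} (hα : Irrational α) : ∀ n, 1 ≤ cfDen α n
  | 0 => le_rfl
  | 1 => one_le_cfDigit_succ hα 0
  | n + 2 => by
    have := one_le_cfDen hα n
    have := one_le_cfDen hα (n + 1)
    have := one_le_cfDigit_succ hα (n + 1)
    rw [cfDen_succ_succ]
    nlinarith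

theorem cfDen_lt_cfDen_succ_succ {α : ℝ} (hα : Irrational α) (n : ℕ) :
    cfDen α (n + 1) < cfDen α (n + 2) := by
  have := one_le_cfDen hα n
  have := one_le_cfDen hα (n + 1)
  have := one_le_cfDigit_succ hα (n + 1)
  rw [cfDen_succ_succ]
  nlinarith

theorem cfDen_monotone {α : ℝ} (hα : Irrational α) : Monotone (cfDen α) :=
  monotone_nat_of_le_succ fun
    | 0 => one_le_cfDigit_succ hα 0
    | n + 1 => (cfDen_lt_cfDen_succ_succ hα n).le

theorem natCast_le_cfDen {α : ℝ} (hα : Irrational α) : ∀ n : ℕ, (n : ℤ) ≤ cfDen α n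
  | 0 => zero_le_one
  | 1 => one_le_cfDigit_succ hα 0
  | n + 2 => by
    have := natCast_le_cfDen hα (n + 1)
    have := cfDen_lt_cfDen_succ_succ hα n
    omega

theorem cfNum_mul_cfDen_sub (α : ℝ) : ∀ n : ℕ,
    cfNum α (n + 1) * cfDen α n - cfNum α n * cfDen α (n + 1) = (-1) ^ n
  | 0 => by
    simp only [cfNum, cfDen]
    ring
  | n + 1 => by
    rw [cfNum_succ_succ, cfDen_succ_succ, pow_succ, ← cfNum_mul_cfDen_sub α n]
    ring

theorem mul_add_eq_of_eq_add_inv {α a x y q₀ q₁ p₀ p₁ : ℝ} (hy : y ≠ 0) (hx : x = a + y⁻¹)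
    (h : α * (q₁ * x + q₀) = p₁ * x + p₀) :
    α * ((a * q₁ + q₀) * y + q₁) = (a * p₁ + p₀) * y + p₁ := by
  subst hx
  linear_combination y * h + (p₁ - α * q₁) * mul_inv_cancel₀ hy

theorem mul_cfDen_add_cfDen {α : ℝ} (hα : Irrational α) : ∀ n : ℕ,
    α * (cfDen α (n + 1) * cfTail α (n + 2) + cfDen α n) =
      cfNum α (n + 1) * cfTail α (n + 2) + cfNum α n
  | 0 => by
    have h₀ : α * (1 * cfTail α 1 + 0) = cfDigit α 0 * cfTail α 1 + 1 := by
      have e : α = cfDigit α 0 + (cfTail α 1)⁻¹ := cfTail_eq_cfDigit_add_inv α 0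
      linear_combination cfTail α 1 * e +
        mul_inv_cancel₀ (zero_lt_one.trans (one_lt_cfTail_succ hα 0)).ne'
    have h₁ := mul_add_eq_of_eq_add_inv (zero_lt_one.trans (one_lt_cfTail_succ hα 1)).ne'
      (cfTail_eq_cfDigit_add_inv α 1) h₀
    simpa [cfNum, cfDen] using h₁
  | n + 1 => by
    have := mul_add_eq_of_eq_add_inv (zero_lt_one.trans (one_lt_cfTail_succ hα (n + 2))).ne'
      (cfTail_eq_cfDigit_add_inv α (n + 2)) (mul_cfDen_add_cfDen hα n)
    rw [cfNum_succ_succ, cfDen_succ_succ]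
    push_cast
    exact this

theorem abs_intermediate_sub {α : ℝ} (hα : Irrational α) (n : ℕ) (k : ℤ) :
    |((cfDen α (n + 1) : ℝ) + k * cfDen α n) * α - ((cfNum α (n + 1) : ℝ) + k * cfNum α n)| =
      |k * cfTail α (n + 2) - 1| / (cfDen α (n + 1) * cfTail α (n + 2) + cfDen α n) := by
  have hq₀ : (1 : ℝ) ≤ cfDen α n := by exact_mod_cast one_le_cfDen hα n
  have hq₁ : (1 : ℝ) ≤ cfDen α (n + 1) := by exact_mod_cast one_le_cfDen hα (n + 1)
  have hx := one_lt_cfTail_succ hα (n + 1)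
  have hD : (0 : ℝ) < cfDen α (n + 1) * cfTail α (n + 2) + cfDen α n := by nlinarith
  have hdet : (cfNum α (n + 1) * cfDen α n - cfNum α n * cfDen α (n + 1) : ℝ) = (-1) ^ n := by
    exact_mod_cast cfNum_mul_cfDen_sub α n
  have hmul : (((cfDen α (n + 1) : ℝ) + k * cfDen α n) * α -
      ((cfNum α (n + 1) : ℝ) + k * cfNum α n)) * (cfDen α (n + 1) * cfTail α (n + 2) + cfDen α n) =
      (-1) ^ n * (k * cfTail α (n + 2) - 1) := by
    linear_combination ((cfDen α (n + 1) : ℝ) + k * cfDen α n) * mul_cfDen_add_cfDen hα n +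
      (k * cfTail α (n + 2) - 1) * hdet
  rw [eq_div_iff hD.ne', ← abs_of_pos hD, ← abs_mul, hmul, abs_mul, abs_pow, abs_neg, abs_one,
    one_pow, one_mul]

theorem ne_convergent_of_cfDen_lt_of_lt {α : ℝ} (hα : Irrational α) {p q : ℤ} {n : ℕ}
    (h₁ : cfDen α n < q) (h₂ : q < cfDen α (n + 1)) (m : ℕ) :
    (p, q) ≠ (cfNum α m, cfDen α m) := by
  intro h
  have hq : q = cfDen α m := congrArg Prod.snd h
  rcases le_or_gt m n with hm | hm
  · have := cfDen_monotone hα hm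
    omega
  · have := cfDen_monotone hα (show n + 1 ≤ m from hm)
    omega

theorem psi2_le {α : ℝ} {p q : ℤ} (hq : 1 ≤ q) (hpq : ∀ m, (p, q) ≠ (cfNum α m, cfDen α m)) :
    psi2 α q ≤ |q * α - p| := by
  refine csInf_le ⟨0, ?_⟩ ⟨p, q, hq, le_rfl, hpq, rfl⟩
  rintro _ ⟨_, _, _, _, _, rfl⟩
  positivity

theorem mul_psi2_le_of_cfDen_lt_of_lt {α : ℝ} (hα : Irrational α) (n : ℕ) (k : ℤ) {m : ℕ}
    (h₁ : cfDen α m < cfDen α (n + 1) + k * cfDen α n)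
    (h₂ : cfDen α (n + 1) + k * cfDen α n < cfDen α (m + 1)) :
    ((cfDen α (n + 1) : ℝ) + k * cfDen α n) * psi2 α ((cfDen α (n + 1) : ℝ) + k * cfDen α n) ≤
      ((cfDen α (n + 1) : ℝ) + k * cfDen α n) * |k * cfTail α (n + 2) - 1| /
        (cfDen α (n + 1) * cfTail α (n + 2) + cfDen α n) := by
  have hq : 1 ≤ cfDen α (n + 1) + k * cfDen α n := (one_le_cfDen hα m).trans h₁.le
  have hψ := psi2_le hq
    (ne_convergent_of_cfDen_lt_of_lt hα (p := cfNum α (n + 1) + k * cfNum α n) h₁ h₂)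
  have ht : (0 : ℝ) ≤ cfDen α (n + 1) + k * cfDen α n := by exact_mod_cast zero_le_one.trans hq
  push_cast at hψ
  rw [mul_div_assoc, ← abs_intermediate_sub hα n k]
  exact mul_le_mul_of_nonneg_left hψ ht

theorem add_mul_sub_one_le {q q' x : ℝ} (hq' : q' ≤ 4 * q) (hx : 1 < x) (h : q * x ≤ q') :
    (q' + q) * (x - 1) ≤ 15 / 17 * (q' * x + q) := by
  nlinarith [mul_le_mul_of_nonneg_right hq' (by linarith : (0 : ℝ) ≤ x)]

theorem sub_mul_add_one_le {q q' x : ℝ} (hq : 0 < q) (hq'₀ : 0 ≤ q') (hq' : q' ≤ 4 * q)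
    (h : q' < q * x) :
    (q' - q) * (x + 1) ≤ 15 / 17 * (q' * x + q) := by
  nlinarith [mul_nonneg (by linarith : 0 ≤ q * x - q') (by linarith : 0 ≤ 17 * q - 2 * q'),
    mul_nonneg (by linarith : 0 ≤ 4 * q - q') (by linarith : 0 ≤ q' + 4 * q)]

theorem exists_mul_psi2_le {α : ℝ} (hα : Irrational α) (n : ℕ) (ha : 2 ≤ cfDigit α (n + 2))
    (ha' : cfDigit α (n + 2) ≤ 3) (hb : 2 ≤ cfDigit α (n + 3)) :
    ∃ t : ℝ, (cfDen α (n + 1) : ℝ) ≤ t ∧ t * psi2 α t ≤ 15 / 17 := by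
  have h₀ := one_le_cfDen hα n
  have h₁ := one_le_cfDen hα (n + 1)
  have h₀₁ := cfDen_monotone hα (Nat.le_succ n)
  have h₂ : cfDen α (n + 2) = cfDigit α (n + 2) * cfDen α (n + 1) + cfDen α n := rfl
  have h₃ : cfDen α (n + 3) = cfDigit α (n + 3) * cfDen α (n + 2) + cfDen α (n + 1) := rfl
  have hlo : 2 * cfDen α (n + 1) < cfDen α (n + 2) := by nlinarith
  have hhi : cfDen α (n + 2) ≤ 4 * cfDen α (n + 1) := by nlinarith
  have hgap : 2 * cfDen α (n + 2) + cfDen α (n + 1) ≤ cfDen α (n + 3) := by nlinarith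
  have hx := one_lt_cfTail_succ hα (n + 2)
  have hq : (1 : ℝ) ≤ cfDen α (n + 1) := by exact_mod_cast h₁
  have hlo' : 2 * (cfDen α (n + 1) : ℝ) < cfDen α (n + 2) := by exact_mod_cast hlo
  have hq' : (cfDen α (n + 2) : ℝ) ≤ 4 * cfDen α (n + 1) := by exact_mod_cast hhi
  have hD : (0 : ℝ) < cfDen α (n + 2) * cfTail α (n + 3) + cfDen α (n + 1) := by nlinarith
  rcases le_or_gt ((cfDen α (n + 1) : ℝ) * cfTail α (n + 3)) (cfDen α (n + 2)) with hc | hc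
  · have hlt₁ : cfDen α (n + 2) < cfDen α (n + 2) + 1 * cfDen α (n + 1) := by omega
    have hlt₂ : cfDen α (n + 2) + 1 * cfDen α (n + 1) < cfDen α (n + 3) := by omega
    have hψ := mul_psi2_le_of_cfDen_lt_of_lt hα (n + 1) 1 hlt₁ hlt₂
    refine ⟨_, by push_cast; linarith, hψ.trans <| (div_le_iff₀ hD).2 ?_⟩
    rw [abs_of_pos (by push_cast; linarith)]
    push_cast
    linarith [add_mul_sub_one_le hq' hx hc]
  · have hlt₁ : cfDen α (n + 1) < cfDen α (n + 2) + -1 * cfDen α (n + 1) := by omega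
    have hlt₂ : cfDen α (n + 2) + -1 * cfDen α (n + 1) < cfDen α (n + 2) := by omega
    have hψ := mul_psi2_le_of_cfDen_lt_of_lt hα (n + 1) (-1) hlt₁ hlt₂
    refine ⟨_, by push_cast; linarith, hψ.trans <| (div_le_iff₀ hD).2 ?_⟩
    rw [abs_of_neg (by push_cast; linarith)]
    push_cast
    linarith [sub_mul_add_one_le (by linarith) (by linarith) hq' hc]

theorem kConst_le_of_forall_exists {α c : ℝ} (h : ∀ b : ℝ, ∃ t ≥ b, t * psi2 α t ≤ c) :
    kConst α ≤ c := by
  have hψ : ∀ t, 0 ≤ psi2 α t := fun t ↦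
    Real.sInf_nonneg fun _ ⟨_, _, _, _, _, hx⟩ ↦ hx ▸ abs_nonneg _
  refine liminf_le_of_frequently_le (frequently_atTop.2 h) ⟨0, ?_⟩
  rw [eventually_map]
  filter_upwards [eventually_ge_atTop 0] with t ht
  exact mul_nonneg ht (hψ t)

theorem kConst_le_fifteen_div_seventeen {α : ℝ} (hα : Irrational α)
    (h : ∃ᶠ n in atTop, (2 ≤ cfDigit α n ∧ cfDigit α n ≤ 3) ∧ 2 ≤ cfDigit α (n + 1)) :
    kConst α ≤ 15 / 17 := by
  refine kConst_le_of_forall_exists fun b ↦ ?_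
  obtain ⟨_ | _ | n, hn, ⟨ha, ha'⟩, hb⟩ := frequently_atTop.1 h (⌈b⌉₊ + 2)
  · omega
  · omega
  obtain ⟨t, hnt, ht⟩ := exists_mul_psi2_le hα n ha ha' hb
  refine ⟨t, le_trans ?_ hnt, ht⟩
  calc b ≤ ⌈b⌉₊ := Nat.le_ceil b
    _ ≤ n + 1 := by exact_mod_cast (by omega : ⌈b⌉₊ ≤ n + 1)
    _ ≤ cfDen α (n + 1) := by exact_mod_cast natCast_le_cfDen hα (n + 1)

theorem stmt_14_general (α : ℝ) (hα : Irrational α)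
    (hpat : ∃ᶠ n in atTop, cfDigit α n = 3 ∧ cfDigit α (n + 1) = 3) :
    kConst α ≤ 39 / 43 :=
  (kConst_le_fifteen_div_seventeen hα <| hpat.mono fun _ ⟨ha, hb⟩ ↦
    ⟨⟨ha.ge.trans' (by norm_num), ha.le⟩, hb.ge.trans' (by norm_num)⟩).trans (by norm_num)

/-- If `α` is irrational, equivalent neither to `(1+√5)/2` nor to `(1+√17)/2`,
with `aₙ ∈ {1, 3}` for infinitely many `n`, and for infinitely many `n` one has
`aₙ₋₁ = aₙ = 3`, then `𝔨(α) ≤ 39/43`. -/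
theorem stmt_14 (α : ℝ) (hα : Irrational α)
    (h5 : ¬ CFEquiv α ((1 + Real.sqrt 5) / 2))
    (h17 : ¬ CFEquiv α ((1 + Real.sqrt 17) / 2))
    (hmem : ∃ᶠ n in atTop, cfDigit α n = 1 ∨ cfDigit α n = 3)
    (hpat : ∃ᶠ n in atTop, cfDigit α n = 3 ∧ cfDigit α (n + 1) = 3) :
    kConst α ≤ 39 / 43 :=
  stmt_14_general α hα hpat
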